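/- Let ξ > 0 and α = ξ. Then the equilibrium (0,0) of the reduced problem is Lyapunov stable: for every ε > 0 there exists δ > 0 such that every solution γ of γ' = f₀(γ; ξ) with |γ(0)| < δ satisfies |γ(t)| < ε for all t ≥ 0 in its maximal interval of existence (and such solutions are defined for all forward time). -/

import Mathlib

/-- The reduced vector field of the spring-block earthquake model:
`f₀(y,z;α) = (e^z − 1, ξ + e^z(αz − ξy − ξ))`. -/
noncomputable def f0 (ξ α y z : ℝ) : ℝ × ℝ :=
  (Real.exp z - 1, ξ + Real.exp z * (α * z - ξ * y - ξ))

open Set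

/-- First integral (Hamiltonian) of the reduced problem at `α = ξ`. -/
noncomputable def Ham (ξ : ℝ) (p : ℝ × ℝ) : ℝ :=
  1 - Real.exp (-ξ * p.1) * (ξ * (p.1 - p.2) + ξ + 1 - ξ * Real.exp (-p.2))

/-- The reduced vector field at `α = ξ` as a map on the plane. -/
noncomputable def Fv (ξ : ℝ) (p : ℝ × ℝ) : ℝ × ℝ := f0 ξ ξ p.1 p.2

lemma ham_zero (ξ : ℝ) : Ham ξ 0 = 0 := by simp [Ham]

lemma ham_cont (ξ : ℝ) : Continuous (Ham ξ) := by
  unfold Ham; fun_prop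

/-- Conservation: derivative of `Ham` along a solution curve is zero. -/
lemma ham_deriv (ξ : ℝ) (σ : ℝ → ℝ × ℝ) (s : Set ℝ) (x : ℝ)
    (hσ : HasDerivWithinAt σ (f0 ξ ξ (σ x).1 (σ x).2) s x) :
    HasDerivWithinAt (fun t => Ham ξ (σ t)) 0 s x := by
  set v := f0 ξ ξ (σ x).1 (σ x).2 with hv
  have h1 : HasDerivWithinAt (fun t => (σ t).1) v.1 s x := by
    exact (ContinuousLinearMap.fst ℝ ℝ ℝ).hasFDerivAt.comp_hasDerivWithinAt x hσ
  have h2 : HasDerivWithinAt (fun t => (σ t).2) v.2 s x := by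
    exact (ContinuousLinearMap.snd ℝ ℝ ℝ).hasFDerivAt.comp_hasDerivWithinAt x hσ
  have hA : HasDerivWithinAt (fun t => Real.exp (-ξ * (σ t).1))
      (Real.exp (-ξ * (σ x).1) * (-ξ * v.1)) s x := (h1.const_mul (-ξ)).exp
  have hB : HasDerivWithinAt
      (fun t => ξ * ((σ t).1 - (σ t).2) + ξ + 1 - ξ * Real.exp (-(σ t).2))
      (ξ * (v.1 - v.2) - ξ * (Real.exp (-(σ x).2) * -v.2)) s x := by
    have hb1 : HasDerivWithinAt (fun t => ξ * ((σ t).1 - (σ t).2) + ξ + 1)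
        (ξ * (v.1 - v.2)) s x := (((h1.sub h2).const_mul ξ).add_const ξ).add_const 1
    have hb2 : HasDerivWithinAt (fun t => ξ * Real.exp (-(σ t).2))
        (ξ * (Real.exp (-(σ x).2) * -v.2)) s x := (h2.neg.exp.const_mul ξ)
    exact hb1.sub hb2
  have hD : HasDerivWithinAt (fun t => Ham ξ (σ t))
      (-(Real.exp (-ξ * (σ x).1) * (-ξ * v.1) *
          (ξ * ((σ x).1 - (σ x).2) + ξ + 1 - ξ * Real.exp (-(σ x).2)) +
        Real.exp (-ξ * (σ x).1) *
          (ξ * (v.1 - v.2) - ξ * (Real.exp (-(σ x).2) * -v.2)))) s x := by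
    simpa [Ham] using (hA.mul hB).const_sub 1
  convert hD using 1
  have hv1 : v.1 = Real.exp (σ x).2 - 1 := rfl
  have hv2 : v.2 = ξ + Real.exp (σ x).2 * (ξ * (σ x).2 - ξ * (σ x).1 - ξ) := rfl
  rw [hv1, hv2, Real.exp_neg]
  field_simp
  ring

lemma ham_pos {ξ : ℝ} (hξ : 0 < ξ) {q : ℝ × ℝ} (hq : q ≠ 0) : 0 < Ham ξ q := by
  obtain ⟨y, z⟩ := q
  set u : ℝ := y - z + 1 - Real.exp (-z) with hu
  set φ : ℝ := z - 1 + Real.exp (-z) with hφ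
  have hyuφ : y = φ + u := by rw [hφ, hu]; ring
  have hE : ξ * (y - z) + ξ + 1 - ξ * Real.exp (-z) = ξ * u + 1 := by rw [hu]; ring
  have hexp : Real.exp (-ξ * y) = Real.exp (-ξ * φ) * Real.exp (-ξ * u) := by
    rw [← Real.exp_add]; congr 1; rw [hyuφ]; ring
  have hg : Ham ξ (y, z) =
      1 - Real.exp (-ξ * φ) * (Real.exp (-ξ * u) * (ξ * u + 1)) := by
    simp only [Ham]
    rw [hE, hexp]; ring
  have hB : Real.exp (-ξ * u) * (ξ * u + 1) ≤ 1 := by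
    have h1 : ξ * u + 1 ≤ Real.exp (ξ * u) := by
      have := Real.add_one_le_exp (ξ * u); linarith
    calc Real.exp (-ξ * u) * (ξ * u + 1) ≤ Real.exp (-ξ * u) * Real.exp (ξ * u) := by
          nlinarith [Real.exp_pos (-ξ * u)]
      _ = 1 := by rw [← Real.exp_add]; simp
  have hφ0 : 0 ≤ φ := by
    have := Real.add_one_le_exp (-z); rw [hφ]; linarith
  have hA1 : Real.exp (-ξ * φ) ≤ 1 := by
    apply Real.exp_le_one_iff.mpr; nlinarith
  rw [hg]
  rcases eq_or_ne z 0 with hz | hz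
  · -- z = 0, so φ = 0, u = y ≠ 0
    have hy : y ≠ 0 := by
      intro h; apply hq; rw [hz, h]; rfl
    have hφz : φ = 0 := by rw [hφ, hz]; simp
    have hu0 : u ≠ 0 := by rw [hu, hz]; simpa using hy
    have hBlt : Real.exp (-ξ * u) * (ξ * u + 1) < 1 := by
      have h1 : ξ * u + 1 < Real.exp (ξ * u) := by
        have := Real.add_one_lt_exp (mul_ne_zero hξ.ne' hu0)
        linarith
      calc Real.exp (-ξ * u) * (ξ * u + 1) < Real.exp (-ξ * u) * Real.exp (ξ * u) := by
            nlinarith [Real.exp_pos (-ξ * u)]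
        _ = 1 := by rw [← Real.exp_add]; simp
    have hApos : 0 < Real.exp (-ξ * φ) := Real.exp_pos _
    nlinarith [mul_lt_mul_of_pos_left hBlt hApos]
  · -- z ≠ 0, so φ > 0
    have hφpos : 0 < φ := by
      have := Real.add_one_lt_exp (neg_ne_zero.mpr hz); rw [hφ]; linarith
    have hAlt : Real.exp (-ξ * φ) < 1 := by
      apply Real.exp_lt_one_iff.mpr; nlinarith
    have hApos : 0 < Real.exp (-ξ * φ) := Real.exp_pos _
    nlinarith [mul_le_mul_of_nonneg_left hB hApos.le]

lemma ham_const (ξ a b : ℝ) (σ : ℝ → ℝ × ℝ)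
    (hcont : ContinuousOn σ (Icc a b))
    (hderiv : ∀ t ∈ Ico a b, HasDerivWithinAt σ (f0 ξ ξ (σ t).1 (σ t).2) (Ici t) t) :
    ∀ t ∈ Icc a b, Ham ξ (σ t) = Ham ξ (σ a) :=
  constant_of_has_deriv_right_zero ((ham_cont ξ).comp_continuousOn hcont)
    (fun x hx => ham_deriv ξ σ _ x (hderiv x hx))


lemma stay (ξ ε m : ℝ) (hm : ∀ q : ℝ × ℝ, ‖q‖ = ε → m ≤ Ham ξ q)
    (a b t0 : ℝ) (σ : ℝ → ℝ × ℝ) (ht0 : t0 ∈ Icc a b)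
    (hcont : ContinuousOn σ (Icc a b))
    (hconst : ∀ t ∈ Icc a b, Ham ξ (σ t) = Ham ξ (σ t0))
    (hn : ‖σ t0‖ < ε) (hH : Ham ξ (σ t0) < m) :
    ∀ t ∈ Icc a b, ‖σ t‖ < ε := by
  by_contra hcon
  push_neg at hcon
  obtain ⟨t, ht, hte⟩ := hcon
  have hex : ∃ s ∈ Icc a b, ‖σ s‖ = ε := by
    rcases le_total t0 t with hle | hle
    · have sub : Icc t0 t ⊆ Icc a b := Icc_subset_Icc ht0.1 ht.2
      have hiv := intermediate_value_Icc hle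
        (continuous_norm.comp_continuousOn (hcont.mono sub))
      obtain ⟨s, hs, hs2⟩ := hiv ⟨hn.le, hte⟩
      exact ⟨s, sub hs, hs2⟩
    · have sub : Icc t t0 ⊆ Icc a b := Icc_subset_Icc ht.1 ht0.2
      have hiv := intermediate_value_Icc' hle
        (continuous_norm.comp_continuousOn (hcont.mono sub))
      obtain ⟨s, hs, hs2⟩ := hiv ⟨hn.le, hte⟩
      exact ⟨s, sub hs, hs2⟩
  obtain ⟨s, hs, hse⟩ := hex
  have h1 := hm (σ s) hse
  rw [hconst s hs] at h1
  linarith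

lemma contDiff_Fv (ξ : ℝ) : ContDiff ℝ 1 (Fv ξ) := by
  unfold Fv f0
  fun_prop

lemma global_sol (ξ ε m : ℝ) (hξ : 0 < ξ) (hε : 0 < ε)
    (hm : ∀ q : ℝ × ℝ, ‖q‖ = ε → m ≤ Ham ξ q)
    (p : ℝ × ℝ) (hp : ‖p‖ < ε) (hHp : Ham ξ p < m) :
    ∃ γ : ℝ → ℝ × ℝ, γ 0 = p ∧
      (∀ t : ℝ, 0 ≤ t → HasDerivAt γ (f0 ξ ξ (γ t).1 (γ t).2) t) ∧
      ∀ t : ℝ, 0 ≤ t → ‖γ t‖ < ε := by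
  classical
  set c := Ham ξ p with hc
  -- Lipschitz constant on the big ball
  obtain ⟨L₀, hL₀⟩ := (isCompact_closedBall (0 : ℝ × ℝ) (ε + 1)).exists_bound_of_continuousOn
    ((contDiff_Fv ξ).continuous_fderiv one_ne_zero).continuousOn
  have hLip : LipschitzOnWith L₀.toNNReal (Fv ξ) (Metric.closedBall 0 (ε + 1)) := by
    apply (convex_closedBall _ _).lipschitzOnWith_of_nnnorm_fderiv_le
      (fun x _ => ((contDiff_Fv ξ).differentiable one_ne_zero).differentiableAt)
    intro x hx
    have := hL₀ x hx
    rw [← norm_toNNReal]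
    exact Real.toNNReal_mono this
  -- bound on the vector field
  obtain ⟨C₀, hC₀⟩ := (isCompact_closedBall (0 : ℝ × ℝ) (ε + 1)).exists_bound_of_continuousOn
    (contDiff_Fv ξ).continuous.continuousOn
  have hC0 : 0 ≤ C₀ :=
    le_trans (norm_nonneg _) (hC₀ 0 (Metric.mem_closedBall_self (by positivity)))
  set h : ℝ := 1 / (2 * (C₀ + 1)) with hhdef
  have hh : 0 < h := by positivity
  -- local existence with invariance
  have loc : ∀ q : ℝ × ℝ, ‖q‖ < ε → Ham ξ q ≤ c → ∀ t0 : ℝ,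
      ∃ σ : ℝ → ℝ × ℝ, σ t0 = q ∧
        (∀ t ∈ Icc (t0 - h) (t0 + h),
          HasDerivWithinAt σ (Fv ξ (σ t)) (Icc (t0 - h) (t0 + h)) t) ∧
        ∀ t ∈ Icc (t0 - h) (t0 + h), ‖σ t‖ < ε ∧ Ham ξ (σ t) ≤ c := by
    intro q hq hHq t0
    have hsub : Metric.closedBall q 1 ⊆ Metric.closedBall (0 : ℝ × ℝ) (ε + 1) := by
      apply Metric.closedBall_subset_closedBall'
      have : dist q 0 = ‖q‖ := by simp
      rw [this]; linarith
    have hPL : IsPicardLindelof (fun _ => Fv ξ) (tmin := t0 - h) (tmax := t0 + h)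
        ⟨t0, by constructor <;> linarith⟩ q 1 0 C₀.toNNReal L₀.toNNReal :=
      { lipschitzOnWith := fun t _ => hLip.mono (by simpa using hsub)
        continuousOn := fun x _ => continuousOn_const
        norm_le := fun t _ x hx => (hC₀ x (hsub (by simpa using hx))).trans
          (Real.le_coe_toNNReal C₀)
        mul_max_le := by
          have h1 : t0 + h - t0 = h := by ring
          have h2 : t0 - (t0 - h) = h := by ring
          simp only [h1, h2, max_self, NNReal.coe_one, NNReal.coe_zero, sub_zero, tsub_zero,
            Real.coe_toNNReal _ hC0]
          rw [hhdef]
          rw [mul_one_div]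
          rw [div_le_one (by positivity)]
          linarith }
    obtain ⟨σ, hσ0, hσd⟩ := hPL.exists_eq_forall_mem_Icc_hasDerivWithinAt₀
    replace hσ0 : σ t0 = q := hσ0
    have hcont : ContinuousOn σ (Icc (t0 - h) (t0 + h)) :=
      fun t ht => (hσd t ht).continuousWithinAt
    have hconst : ∀ t ∈ Icc (t0 - h) (t0 + h), Ham ξ (σ t) = Ham ξ (σ t0) := by
      have h1 := ham_const ξ (t0 - h) (t0 + h) σ hcont
        (fun s hs => (hσd s (Ico_subset_Icc_self hs)).mono_of_mem_nhdsWithin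
          (Icc_mem_nhdsGE_of_mem hs))
      intro t ht
      rw [h1 t ht, h1 t0 ⟨by linarith, by linarith⟩]
    have hb := stay ξ ε m hm (t0 - h) (t0 + h) t0 σ ⟨by linarith, by linarith⟩
      hcont hconst (by rw [hσ0]; exact hq) (by rw [hσ0]; exact lt_of_le_of_lt hHq hHp)
    refine ⟨σ, hσ0, fun t ht => hσd t ht, fun t ht => ⟨hb t ht, ?_⟩⟩
    rw [hconst t ht, hσ0]; exact hHq
  choose! σf hσ1 hσ2 hσ3 using loc
  -- the discrete trajectory
  set x : ℕ → ℝ × ℝ := fun n => Nat.rec p (fun n xn => σf xn (n * h) (n * h + h)) n with hxdef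
  have hx : ∀ n : ℕ, ‖x n‖ < ε ∧ Ham ξ (x n) ≤ c := by
    intro n
    induction n with
    | zero => exact ⟨hp, le_rfl⟩
    | succ n ih =>
      have := (hσ3 (x n) ih.1 ih.2 ((n : ℝ) * h) ((n : ℝ) * h + h)
        ⟨by linarith, le_rfl⟩)
      exact this
  -- the glued solution
  set γ : ℝ → ℝ × ℝ := fun t => σf (x ⌊t / h⌋₊) ((⌊t / h⌋₊ : ℝ) * h) t with hγdef
  have hfl : ∀ (n : ℕ) (t : ℝ), (n : ℝ) * h ≤ t → t < (n : ℝ) * h + h → ⌊t / h⌋₊ = n := by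
    intro n t h1 h2
    have htnn : 0 ≤ t / h := by
      apply div_nonneg _ hh.le
      have : (0 : ℝ) ≤ (n : ℝ) * h := by positivity
      linarith
    rw [Nat.floor_eq_iff htnn]
    constructor
    · rw [le_div_iff₀ hh]; exact h1
    · rw [div_lt_iff₀ hh]; linarith
  have hmem : ∀ t : ℝ, 0 ≤ t →
      (⌊t / h⌋₊ : ℝ) * h ≤ t ∧ t < (⌊t / h⌋₊ : ℝ) * h + h := by
    intro t ht
    have h1 : (⌊t / h⌋₊ : ℝ) ≤ t / h := Nat.floor_le (div_nonneg ht hh.le)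
    have h2 : t / h < ⌊t / h⌋₊ + 1 := Nat.lt_floor_add_one _
    constructor
    · calc (⌊t / h⌋₊ : ℝ) * h ≤ (t / h) * h := by nlinarith
        _ = t := by field_simp
    · have : t = (t / h) * h := by field_simp
      nlinarith
  -- initial condition
  have hγ0 : γ 0 = p := by
    have hf0 : ⌊(0 : ℝ) / h⌋₊ = 0 := by simp
    show σf (x ⌊(0 : ℝ) / h⌋₊) ((⌊(0 : ℝ) / h⌋₊ : ℝ) * h) 0 = p
    rw [hf0]
    have := hσ1 (x 0) hp le_rfl ((0 : ℕ) * h)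
    simpa [show x 0 = p from rfl] using this
  -- norm bound
  have hγb : ∀ t : ℝ, 0 ≤ t → ‖γ t‖ < ε := by
    intro t ht
    obtain ⟨h1, h2⟩ := hmem t ht
    set n := ⌊t / h⌋₊
    exact (hσ3 (x n) (hx n).1 (hx n).2 ((n : ℝ) * h) t ⟨by linarith, by linarith⟩).1
  -- derivative
  have hγd : ∀ t : ℝ, 0 ≤ t → HasDerivAt γ (Fv ξ (γ t)) t := by
    intro t ht
    obtain ⟨h1, h2⟩ := hmem t ht
    set n := ⌊t / h⌋₊ with hn
    rcases eq_or_lt_of_le h1 with heq | hlt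
    · -- t = n * h : junction or start
      rcases Nat.eq_zero_or_pos n with hn0 | hnpos
      · -- n = 0, t = 0 : interior of the first interval
        have hEq : γ =ᶠ[nhds t] σf (x n) ((n : ℝ) * h) := by
          filter_upwards [Iio_mem_nhds (show t < h by
            rw [hn0] at heq; push_cast at heq; linarith)] with s hs
          show σf (x ⌊s / h⌋₊) ((⌊s / h⌋₊ : ℝ) * h) s = _
          have : ⌊s / h⌋₊ = 0 := Nat.floor_eq_zero.mpr ((div_lt_one hh).mpr hs)
          rw [this, ← hn0]
        have hd : HasDerivAt (σf (x n) ((n : ℝ) * h))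
            (Fv ξ (σf (x n) ((n : ℝ) * h) t)) t := by
          apply (hσ2 (x n) (hx n).1 (hx n).2 ((n : ℝ) * h) t
            ⟨by linarith, by linarith⟩).hasDerivAt
          apply Icc_mem_nhds
          · rw [hn0] at heq ⊢; push_cast at heq ⊢; linarith
          · linarith
        have hval : γ t = σf (x n) ((n : ℝ) * h) t := rfl
        rw [hval]
        exact hd.congr_of_eventuallyEq hEq
      · -- n = m + 1 : junction point
        obtain ⟨m, hnm⟩ := Nat.exists_eq_succ_of_ne_zero hnpos.ne'
        have ht' : t = (m : ℝ) * h + h := by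
          rw [← heq, hnm]; push_cast; ring
        have hvalR : γ t = σf (x n) ((n : ℝ) * h) t := rfl
        have hxsucc : x n = σf (x m) ((m : ℝ) * h) ((m : ℝ) * h + h) := by
          rw [hnm]
        have hvalL : σf (x m) ((m : ℝ) * h) t = γ t := by
          rw [hvalR, ← heq]
          have hR0 := hσ1 (x n) (hx n).1 (hx n).2 ((n : ℝ) * h)
          rw [hR0, hxsucc, ← ht', heq]
        -- right piece
        have hRd : HasDerivWithinAt γ (Fv ξ (γ t)) (Ici t) t := by
          have hR := (hσ2 (x n) (hx n).1 (hx n).2 ((n : ℝ) * h) t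
            ⟨by linarith, by linarith⟩).mono_of_mem_nhdsWithin
            (Icc_mem_nhdsGE_of_mem ⟨by linarith, by linarith⟩)
          rw [hvalR]
          apply hR.congr_of_eventuallyEq _ hvalR
          filter_upwards [Ico_mem_nhdsGE_of_mem
            (show t ∈ Ico t ((n : ℝ) * h + h) by exact ⟨le_rfl, by linarith⟩)] with s hs
          show σf (x ⌊s / h⌋₊) ((⌊s / h⌋₊ : ℝ) * h) s = _
          rw [hfl n s (by linarith [hs.1]) hs.2]
        -- left piece
        have hLd : HasDerivWithinAt γ (Fv ξ (γ t)) (Iic t) t := by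
          have hL := (hσ2 (x m) (hx m).1 (hx m).2 ((m : ℝ) * h) t
            ⟨by linarith, by rw [ht']⟩).mono_of_mem_nhdsWithin
            (Icc_mem_nhdsLE_of_mem ⟨by linarith, by rw [ht']⟩)
          rw [hvalL] at hL
          apply hL.congr_of_eventuallyEq _ hvalL.symm
          filter_upwards [Ioc_mem_nhdsLE_of_mem
            (show t ∈ Ioc ((m : ℝ) * h) t by exact ⟨by rw [ht']; linarith, le_rfl⟩)] with s hs
          rcases eq_or_lt_of_le hs.2 with hst | hst
          · rw [hst]; exact hvalL.symm
          · show σf (x ⌊s / h⌋₊) ((⌊s / h⌋₊ : ℝ) * h) s = _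
            have : ⌊s / h⌋₊ = m := by
              apply hfl m s hs.1.le
              rw [ht'] at hst; linarith
            rw [this]
        have := hLd.union hRd
        rw [Iic_union_Ici] at this
        exact hasDerivWithinAt_univ.mp this
    · -- n * h < t : interior
      have hfloor : ⌊t / h⌋₊ = n := rfl
      have hEq : γ =ᶠ[nhds t] σf (x n) ((n : ℝ) * h) := by
        filter_upwards [Ioo_mem_nhds hlt h2] with s hs
        show σf (x ⌊s / h⌋₊) ((⌊s / h⌋₊ : ℝ) * h) s = _
        rw [hfl n s hs.1.le hs.2]
      have hd : HasDerivAt (σf (x n) ((n : ℝ) * h))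
          (Fv ξ (σf (x n) ((n : ℝ) * h) t)) t := by
        apply (hσ2 (x n) (hx n).1 (hx n).2 ((n : ℝ) * h) t
          ⟨by linarith, by linarith⟩).hasDerivAt
        exact Icc_mem_nhds (by linarith) (by linarith)
      have hval : γ t = σf (x n) ((n : ℝ) * h) t := rfl
      rw [hval]
      exact hd.congr_of_eventuallyEq hEq
  exact ⟨γ, hγ0, fun t ht => hγd t ht, hγb⟩

/-- At `α = ξ` the equilibrium `(0,0)` of the reduced problem is Lyapunov stable:
for every `ε > 0` there is `δ > 0` such that every solution starting in the
`δ`-ball around the origin remains in the `ε`-ball for all forward time on its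
interval of existence; moreover solutions starting in the `δ`-ball exist for all
forward time. -/
theorem stmt11 (ξ : ℝ) (hξ : 0 < ξ) :
    ∀ ε > (0 : ℝ), ∃ δ > (0 : ℝ),
      (∀ γ : ℝ → ℝ × ℝ, ∀ T : ℝ, 0 < T →
        (∀ t ∈ Set.Ico (0 : ℝ) T, HasDerivAt γ (f0 ξ ξ (γ t).1 (γ t).2) t) →
        ‖γ 0‖ < δ → ∀ t ∈ Set.Ico (0 : ℝ) T, ‖γ t‖ < ε) ∧
      (∀ p : ℝ × ℝ, ‖p‖ < δ →
        ∃ γ : ℝ → ℝ × ℝ, γ 0 = p ∧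
          (∀ t : ℝ, 0 ≤ t → HasDerivAt γ (f0 ξ ξ (γ t).1 (γ t).2) t) ∧
          ∀ t : ℝ, 0 ≤ t → ‖γ t‖ < ε) := by
  intro ε hε
  have hsne : (Metric.sphere (0 : ℝ × ℝ) ε).Nonempty := by
    refine ⟨(ε, 0), ?_⟩
    rw [mem_sphere_zero_iff_norm]
    rw [Prod.norm_def]
    simp [abs_of_pos hε, hε.le]
  obtain ⟨q₀, hq₀, hmin⟩ := (isCompact_sphere (0 : ℝ × ℝ) ε).exists_isMinOn hsne
    (ham_cont ξ).continuousOn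
  set m := Ham ξ q₀ with hmdef
  have hm : ∀ q : ℝ × ℝ, ‖q‖ = ε → m ≤ Ham ξ q := fun q hq =>
    hmin (mem_sphere_zero_iff_norm.mpr hq)
  have hq₀n : ‖q₀‖ = ε := mem_sphere_zero_iff_norm.mp hq₀
  have hm0 : 0 < m := by
    apply ham_pos hξ
    intro h0
    rw [h0] at hq₀n
    simp at hq₀n
    linarith
  have hopen : IsOpen {q : ℝ × ℝ | Ham ξ q < m} := isOpen_lt (ham_cont ξ) continuous_const
  have h0mem : (0 : ℝ × ℝ) ∈ {q : ℝ × ℝ | Ham ξ q < m} := by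
    simp only [Set.mem_setOf_eq, ham_zero]
    exact hm0
  obtain ⟨δ', hδ', hball⟩ := Metric.isOpen_iff.mp hopen 0 h0mem
  refine ⟨min δ' ε, lt_min hδ' hε, ?_, ?_⟩
  · -- solutions stay in the ε-ball
    intro γ T hT hd h0 t htm
    have h0ε : ‖γ 0‖ < ε := lt_of_lt_of_le h0 (min_le_right _ _)
    have h0H : Ham ξ (γ 0) < m :=
      hball (mem_ball_zero_iff.mpr (lt_of_lt_of_le h0 (min_le_left _ _)))
    have hcont : ContinuousOn γ (Set.Icc 0 t) := fun s hs =>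
      (hd s ⟨hs.1, lt_of_le_of_lt hs.2 htm.2⟩).continuousAt.continuousWithinAt
    have hconst : ∀ s ∈ Set.Icc (0 : ℝ) t, Ham ξ (γ s) = Ham ξ (γ 0) :=
      ham_const ξ 0 t γ hcont
        (fun s hs => (hd s ⟨hs.1, hs.2.trans htm.2⟩).hasDerivWithinAt)
    have key := stay ξ ε m hm 0 t 0 γ ⟨le_rfl, htm.1⟩ hcont hconst h0ε h0H
    exact key t ⟨htm.1, le_rfl⟩
  · -- global forward existence
    intro p hp
    exact global_sol ξ ε m hξ hε hm p (lt_of_lt_of_le hp (min_le_right _ _))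
      (hball (mem_ball_zero_iff.mpr (lt_of_lt_of_le hp (min_le_left _ _))))
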